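/- arXiv:1210.1474 — 7 statements merged into one kernel-verified Lean document; each statement's English description precedes it below -/
import Mathlib

section
/- Let D be an integral domain with fraction field K, let g ∈ D[x] and d ∈ D \ {0}, and let f = g/d ∈ K[x]. Then f maps every matrix in M_n(D) into M_n(D) if and only if g is divisible modulo dD[x] by every monic polynomial in D[x] of degree n (i.e., for every monic h ∈ D[x] of degree n there exist q, r ∈ D[x] with g = qh + dr). -/
/-!
Since `g/d` evaluated at `C` is `d⁻¹ • g(C)`, it is integral exactly when `g(C) = d • B` for
some matrix `B` over `D`. If `g = q h + d r` with `h` the characteristic polynomial of `C`,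
Cayley–Hamilton gives `g(C) = d • r(C)`. Conversely, for monic `h` of degree `n`, take for `C`
the matrix of multiplication by the root of `h` on `D[X]/(h)` in the basis `1, x, …, x^(n-1)`
(the companion matrix of `h`): then `g(C)` is the matrix of multiplication by `g mod h`, and
applying it to `1` shows that `d` divides every coordinate of `g mod h`.
-/

open Polynomial Matrix

theorem Matrix.aeval_map_algebraMap {D K ι : Type*} [CommRing D] [CommRing K] [Algebra D K]
    [Fintype ι] [DecidableEq ι] (M : Matrix ι ι D) (p : D[X]) :
    aeval (M.map (algebraMap D K)) p = (aeval M p).map (algebraMap D K) :=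
  aeval_algHom_apply (AlgHom.mapMatrix (Algebra.ofId D K)) M p

theorem exists_aeval_map_C_inv_mul_eq_map_iff {D K ι : Type*} [CommRing D] [Field K]
    [Algebra D K] [Fintype ι] [DecidableEq ι] (hinj : Function.Injective (algebraMap D K))
    {d : D} (hd : d ≠ 0) (g : D[X]) (M : Matrix ι ι D) :
    (∃ B : Matrix ι ι D, aeval (M.map (algebraMap D K))
        (C (algebraMap D K d)⁻¹ * g.map (algebraMap D K)) = B.map (algebraMap D K)) ↔
      ∃ B : Matrix ι ι D, aeval M g = d • B := by
  have hd' : algebraMap D K d ≠ 0 := (map_ne_zero_iff _ hinj).2 hd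
  have hmap : ∀ B : Matrix ι ι D, (d • B).map (algebraMap D K) =
      algebraMap D K d • B.map (algebraMap D K) := fun B => by ext; simp
  simp only [map_mul, aeval_C, aeval_map_algebraMap, Matrix.aeval_map_algebraMap,
    ← Algebra.smul_def, inv_smul_eq_iff₀ hd', ← hmap, (Matrix.map_injective hinj).eq_iff]

theorem Algebra.exists_eq_smul_of_leftMulMatrix_eq_smul {R S ι : Type*} [CommRing R] [Ring S]
    [Algebra R S] [Fintype ι] [DecidableEq ι] (b : Module.Basis ι R S) {x : S} {d : R}
    {B : Matrix ι ι R} (hx : leftMulMatrix b x = d • B) : ∃ y : S, x = d • y := by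
  refine ⟨b.equivFun.symm (B *ᵥ b.repr 1), b.equivFun.injective ?_⟩
  have hrepr := leftMulMatrix_mulVec_repr b x 1
  rw [mul_one, hx, Matrix.smul_mulVec] at hrepr
  rw [map_smul, LinearEquiv.apply_symm_apply, Module.Basis.equivFun_apply, ← hrepr]

theorem AdjoinRoot.exists_eq_mul_add_C_mul_of_aeval_leftMulMatrix_eq_smul {R : Type*}
    [CommRing R] {h : R[X]} (hh : h.Monic) {g : R[X]} {d : R}
    {B : Matrix (Fin (powerBasis' hh).dim) (Fin (powerBasis' hh).dim) R}
    (hB : aeval (Algebra.leftMulMatrix (powerBasis' hh).basis (root h)) g = d • B) :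
    ∃ q r : R[X], g = q * h + C d * r := by
  rw [aeval_algHom_apply, aeval_eq] at hB
  obtain ⟨y, hy⟩ := Algebra.exists_eq_smul_of_leftMulMatrix_eq_smul _ hB
  obtain ⟨r, rfl⟩ := mk_surjective y
  rw [smul_mk, smul_eq_C_mul, mk_eq_mk] at hy
  obtain ⟨q, hq⟩ := hy
  exact ⟨q, r, by rw [mul_comm q, ← hq, sub_add_cancel]⟩

/-- Fact (Frisch): for `f = g/d ∈ K[x]`, `f` maps `Mₙ(D)` into `Mₙ(D)` iff `g` is
divisible modulo `dD[x]` by every monic polynomial in `D[x]` of degree `n`. -/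
theorem stmt_0 {D K : Type*} [CommRing D] [IsDomain D] [Field K] [Algebra D K]
    [IsFractionRing D K] (n : ℕ) (g : D[X]) (d : D) (hd : d ≠ 0)
    (f : K[X]) (hf : f = Polynomial.C ((algebraMap D K d)⁻¹) * g.map (algebraMap D K)) :
    (∀ C : Matrix (Fin n) (Fin n) D, ∃ B : Matrix (Fin n) (Fin n) D,
        Polynomial.aeval (C.map (algebraMap D K)) f = B.map (algebraMap D K)) ↔
      (∀ h : D[X], h.Monic → h.natDegree = n →
        ∃ q r : D[X], g = q * h + Polynomial.C d * r) := by
  subst hf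
  simp only [exists_aeval_map_C_inv_mul_eq_map_iff (IsFractionRing.injective D K) hd]
  constructor
  · rintro H h hh rfl
    obtain ⟨B, hB⟩ :=
      H (Algebra.leftMulMatrix (AdjoinRoot.powerBasis' hh).basis (AdjoinRoot.root h))
    exact AdjoinRoot.exists_eq_mul_add_C_mul_of_aeval_leftMulMatrix_eq_smul hh hB
  · intro H M
    obtain ⟨q, r, rfl⟩ := H M.charpoly M.charpoly_monic (by simp)
    refine ⟨aeval M r, ?_⟩
    rw [map_add, map_mul, map_mul, aeval_self_charpoly, mul_zero, zero_add, aeval_C,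
      Algebra.smul_def]
end

section
/- Let D be an integral domain in which the intersection of all maximal ideals of finite index is (0). For any d ∈ D \ {0} and any monic polynomial h ∈ D[x] of degree n, there exists a monic polynomial k ∈ D[x] of degree n that is irreducible in D[x] and congruent to h modulo dD[x]. -/
/-!
Choose a maximal ideal `P` of finite index with `d ∉ P`; it exists because the maximal ideals
of finite index meet in `(0)`. Over the finite field `D ⧸ P` there is a monic irreducible `g` of
degree `n` (the minimal polynomial of a primitive element of the degree `n` extension). Since `d`
is a unit modulo `P`, `g - h̄` can be written as `d̄ • r̄` with `deg r̄ < n`; lifting `r̄` to `r`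
gives `k = h + d r`, monic of degree `n` with `k ≡ h mod d` and `k̄ = g`. A monic polynomial
with irreducible reduction is irreducible.
-/

open Polynomial

theorem FiniteField.exists_monic_irreducible_natDegree_eq (F : Type*) [Field F] [Finite F]
    {n : ℕ} (hn : n ≠ 0) : ∃ g : F[X], g.Monic ∧ Irreducible g ∧ g.natDegree = n := by
  obtain ⟨p, _⟩ := CharP.exists F
  have : Fact p.Prime := ⟨CharP.char_is_prime F p⟩
  have : NeZero n := ⟨hn⟩
  obtain ⟨α, hα⟩ := Field.exists_primitive_element F (Extension F p n)
  have hint : IsIntegral F α := .of_finite F α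
  refine ⟨minpoly F α, minpoly.monic hint, minpoly.irreducible hint, ?_⟩
  rw [(Field.primitive_element_iff_minpoly_natDegree_eq F α).mp hα, finrank_extension]

theorem Ideal.exists_isMaximal_finite_quotient_notMem {D : Type*} [CommRing D]
    (hrad : (⨅ P ∈ {P : Ideal D | P.IsMaximal ∧ Finite (D ⧸ P)}, P) = ⊥) {d : D} (hd : d ≠ 0) :
    ∃ P : Ideal D, P.IsMaximal ∧ Finite (D ⧸ P) ∧ d ∉ P := by
  by_contra! hcon
  refine hd ((Submodule.mem_bot D).mp (hrad ▸ ?_))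
  simp only [Ideal.mem_iInf]
  exact fun P hP => hcon P hP.1 hP.2

theorem Polynomial.Monic.exists_monic_map_eq_C_dvd_sub {R K : Type*} [CommRing R] [Field K]
    {π : R →+* K} (hπ : Function.Surjective π) {d : R} (hd : π d ≠ 0) {h : R[X]} (hmon : h.Monic)
    {g : K[X]} (hg : g.Monic) (hdeg : g.natDegree = h.natDegree) :
    ∃ k : R[X], k.Monic ∧ k.map π = g ∧ C d ∣ k - h := by
  have hmap : (h.map π).Monic := hmon.map π
  have hgh : g.degree = (h.map π).degree := by
    rw [degree_eq_natDegree hg.ne_zero, degree_eq_natDegree hmap.ne_zero, hmon.natDegree_map,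
      hdeg]
  set r : K[X] := C (π d)⁻¹ * (g - h.map π)
  have hr : r.degree < h.degree := calc
    r.degree = (g - h.map π).degree := degree_C_mul (inv_ne_zero hd)
    _ < g.degree := degree_sub_lt_left hgh hg.ne_zero (by rw [hg.leadingCoeff, hmap.leadingCoeff])
    _ = h.degree := by rw [hgh, hmon.degree_map π]
  obtain ⟨m, hm, hmdeg⟩ := exists_degree_eq_of_mem_lifts
    ((lifts_iff_coeff_lifts r).mpr fun _ => hπ _)
  have hdm : (C d * m).degree < h.degree :=
    smul_eq_C_mul d ▸ (degree_smul_le d m).trans_lt (hmdeg ▸ hr)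
  refine ⟨h + C d * m, hmon.add_of_left hdm, ?_, ⟨m, by ring⟩⟩
  rw [Polynomial.map_add, Polynomial.map_mul, map_C, hm, ← mul_assoc, ← C_mul,
    mul_inv_cancel₀ hd, C_1, one_mul, add_sub_cancel]

/-- If the intersection of the maximal ideals of finite index of a domain `D` is `(0)`,
then every monic polynomial of degree `n ≥ 1` is congruent modulo `dD[x]` to a monic
irreducible polynomial of degree `n`. -/
theorem stmt_1 {D : Type*} [CommRing D] [IsDomain D]
    (hrad : (⨅ P ∈ {P : Ideal D | P.IsMaximal ∧ Finite (D ⧸ P)}, P) = ⊥)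
    (n : ℕ) (hn : 0 < n) (d : D) (hd : d ≠ 0)
    (h : D[X]) (hmon : h.Monic) (hdeg : h.natDegree = n) :
    ∃ k : D[X], k.Monic ∧ k.natDegree = n ∧ Irreducible k ∧
      Polynomial.C d ∣ (k - h) := by
  obtain ⟨P, hPmax, hPfin, hdP⟩ := Ideal.exists_isMaximal_finite_quotient_notMem hrad hd
  let : Field (D ⧸ P) := Ideal.Quotient.field P
  obtain ⟨g, hgmon, hgirr, hgdeg⟩ :=
    FiniteField.exists_monic_irreducible_natDegree_eq (D ⧸ P) hn.ne'
  obtain ⟨k, hkmon, hkmap, hdvd⟩ := hmon.exists_monic_map_eq_C_dvd_sub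
    Ideal.Quotient.mk_surjective (mt Ideal.Quotient.eq_zero_iff_mem.mp hdP) hgmon
    (hgdeg.trans hdeg.symm)
  refine ⟨k, hkmon, ?_, hkmon.irreducible_of_irreducible_map _ k (hkmap ▸ hgirr), hdvd⟩
  rw [← hgdeg, ← hkmap, hkmon.natDegree_map]
end

section
/- Let D be an integral domain with fraction field K, and let 𝒞_n ⊆ M_n(D) be the set of companion matrices of monic polynomials of degree n in D[x]. Then a polynomial f ∈ K[x] maps every matrix in M_n(D) into M_n(D) if and only if it maps every companion matrix in 𝒞_n into M_n(D). -/
open Polynomial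

/-- The companion matrix of a monic polynomial of degree `n`: ones on the
subdiagonal, negated coefficients in the last column. -/
def companionMatrix {D : Type*} [CommRing D] (n : ℕ) (p : D[X]) :
    Matrix (Fin n) (Fin n) D :=
  Matrix.of fun i j =>
    if (j : ℕ) + 1 = (i : ℕ) then 1
    else if (j : ℕ) = n - 1 then -p.coeff (i : ℕ) else 0

/-! Reduce `f` modulo the characteristic polynomial `χ` of `A`: by Cayley–Hamilton
`f(A) = r(A)` with `deg r < n`, and since `χ` also annihilates its companion matrix `C_χ`,
`f(C_χ) = r(C_χ)`. As `C_χ ^ k e₀ = e_k` for `k < n`, the first column of `r(C_χ)` is the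
coefficient vector of `r`; so if `f(C_χ)` has entries in `D`, then `r ∈ D[X]` and
`f(A) = r(A)` has entries in `D`. -/

section Companion

open Matrix

variable {R : Type*} [CommRing R] {n : ℕ} (p : R[X])

lemma companionMatrix_map {S : Type*} [CommRing S] (f : R →+* S) :
    (companionMatrix n p).map f = companionMatrix n (p.map f) := by
  ext i j
  simp [companionMatrix, apply_ite f, Polynomial.coeff_map]

lemma companionMatrix_pow_mulVec_single_zero :
    ∀ k (hk : k < n + 1),
      companionMatrix (n + 1) p ^ k *ᵥ Pi.single 0 1 = Pi.single ⟨k, hk⟩ 1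
  | 0, _ => by rw [pow_zero, one_mulVec]; rfl
  | k + 1, hk => by
    rw [pow_succ', ← mulVec_mulVec,
      companionMatrix_pow_mulVec_single_zero k (by omega), mulVec_single_one]
    funext i
    simp only [companionMatrix, col_apply, of_apply, Pi.single_apply, Fin.ext_iff]
    split_ifs <;> first | rfl | omega

lemma companionMatrix_pow_succ_mulVec_single_zero :
    companionMatrix (n + 1) p ^ (n + 1) *ᵥ Pi.single 0 1 =
      fun i : Fin (n + 1) => -p.coeff i := by
  rw [pow_succ', ← mulVec_mulVec,
    companionMatrix_pow_mulVec_single_zero p n n.lt_succ_self, mulVec_single_one]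
  funext i
  simp only [companionMatrix, col_apply, of_apply]
  split_ifs <;> first | rfl | omega

lemma aeval_companionMatrix_mulVec_single_zero {r : R[X]} (hr : r.natDegree < n + 1) :
    aeval (companionMatrix (n + 1) p) r *ᵥ Pi.single 0 1 =
      fun i : Fin (n + 1) => r.coeff i := by
  rw [aeval_eq_sum_range' hr, ← Fin.sum_univ_eq_sum_range, sum_mulVec]
  simp_rw [smul_mulVec, companionMatrix_pow_mulVec_single_zero p _ (Fin.is_lt _)]
  funext i
  simp [Pi.single_apply]

lemma aeval_companionMatrix_self {p : R[X]} (hp : IsMonicOfDegree p (n + 1)) :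
    aeval (companionMatrix (n + 1) p) p = 0 := by
  set C := companionMatrix (n + 1) p
  have h_single_zero : aeval C p *ᵥ Pi.single 0 1 = 0 := by
    obtain ⟨q, hpq, hq⟩ := hp.exists_natDegree_lt n.succ_ne_zero
    conv_lhs => enter [1, 2]; rw [hpq]
    rw [map_add, add_mulVec, map_pow, aeval_X, companionMatrix_pow_succ_mulVec_single_zero,
      aeval_companionMatrix_mulVec_single_zero p hq]
    funext i
    simp [hpq, coeff_X_pow, i.is_lt.ne]
  refine ext_of_mulVec_single fun j => ?_
  -- `e_j = C ^ j e_0` and `aeval C p` commutes with `C ^ j`.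
  have hcomm : aeval C p * C ^ (j : ℕ) = C ^ (j : ℕ) * aeval C p := by
    simpa using ((Commute.all p (X ^ (j : ℕ))).map (aeval C)).eq
  rw [← companionMatrix_pow_mulVec_single_zero p j j.is_lt, mulVec_mulVec, hcomm,
    ← mulVec_mulVec, h_single_zero, mulVec_zero, zero_mulVec]

end Companion

lemma aeval_matrix_map {D K ι : Type*} [CommRing D] [CommRing K] [Algebra D K] [Fintype ι]
    [DecidableEq ι] (A : Matrix ι ι D) (q : D[X]) :
    aeval (A.map (algebraMap D K)) (q.map (algebraMap D K)) = (aeval A q).map (algebraMap D K) := by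
  rw [aeval_map_algebraMap]
  exact aeval_algHom_apply (Algebra.ofId D K).mapMatrix A q

section Lifts

variable {D K : Type*} [CommRing D] [CommRing K] (φ : D →+* K) {n : ℕ}

lemma mem_lifts_of_aeval_companionMatrix (p : K[X]) {r : K[X]} (hr : r.natDegree < n + 1)
    {B : Matrix (Fin (n + 1)) (Fin (n + 1)) D}
    (h : aeval (companionMatrix (n + 1) p) r = B.map φ) : r ∈ lifts φ := by
  refine (lifts_iff_coeff_lifts r).2 fun k => ?_
  by_cases hk : k < n + 1
  · refine ⟨B ⟨k, hk⟩ 0, ?_⟩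
    have := congrFun (aeval_companionMatrix_mulVec_single_zero p hr) ⟨k, hk⟩
    rw [h] at this
    simpa using this
  · rw [coeff_eq_zero_of_natDegree_lt (by omega)]
    exact ⟨0, map_zero φ⟩

lemma mem_lifts_modByMonic_of_aeval_companionMatrix [Nontrivial K] {p : D[X]}
    (hp : IsMonicOfDegree p (n + 1)) (f : K[X]) {B : Matrix (Fin (n + 1)) (Fin (n + 1)) D}
    (h : aeval ((companionMatrix (n + 1) p).map φ) f = B.map φ) :
    f %ₘ p.map φ ∈ lifts φ := by
  have hpφ : IsMonicOfDegree (p.map φ) (n + 1) :=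
    ⟨by rw [hp.monic.natDegree_map, hp.natDegree_eq], hp.monic.map φ⟩
  have hdeg : (f %ₘ p.map φ).natDegree < n + 1 :=
    hpφ.natDegree_eq ▸ natDegree_modByMonic_lt f hpφ.monic fun h1 => by
      simpa [h1] using hpφ.natDegree_eq
  refine mem_lifts_of_aeval_companionMatrix φ (p.map φ) hdeg (B := B) ?_
  rw [aeval_modByMonic_eq_self_of_root (aeval_companionMatrix_self hpφ), ← companionMatrix_map,
    h]

end Lifts

theorem stmt_3_general {D K : Type*} [CommRing D] [Field K] [Algebra D K]
    (n : ℕ) (f : K[X]) :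
    (∀ C : Matrix (Fin n) (Fin n) D, ∃ B : Matrix (Fin n) (Fin n) D,
        Polynomial.aeval (C.map (algebraMap D K)) f = B.map (algebraMap D K)) ↔
      (∀ p : D[X], p.Monic → p.natDegree = n →
        ∃ B : Matrix (Fin n) (Fin n) D,
          Polynomial.aeval ((companionMatrix n p).map (algebraMap D K)) f
            = B.map (algebraMap D K)) := by
  refine ⟨fun h p _ _ => h (companionMatrix n p), fun h A => ?_⟩
  have : Nontrivial D := (algebraMap D K).domain_nontrivial
  obtain _ | m := n
  · exact ⟨0, Subsingleton.elim _ _⟩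
  have hχ : IsMonicOfDegree A.charpoly (m + 1) := ⟨by simp, A.charpoly_monic⟩
  obtain ⟨B, hB⟩ := h A.charpoly hχ.monic hχ.natDegree_eq
  obtain ⟨r, hr⟩ := (mem_lifts _).1 (mem_lifts_modByMonic_of_aeval_companionMatrix _ hχ f hB)
  refine ⟨aeval A r, ?_⟩
  rw [← aeval_matrix_map, hr, aeval_modByMonic_eq_self_of_root]
  rw [← Matrix.charpoly_map, Matrix.aeval_self_charpoly]

/-- `Int_D(Mₙ(D)) = Int_D(𝒞ₙ, Mₙ(D))`: companion matrices of monic polynomials of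
degree `n` form a polynomially dense subset of `Mₙ(D)`. -/
theorem stmt_3 {D K : Type*} [CommRing D] [IsDomain D] [Field K] [Algebra D K]
    [IsFractionRing D K] (n : ℕ) (f : K[X]) :
    (∀ C : Matrix (Fin n) (Fin n) D, ∃ B : Matrix (Fin n) (Fin n) D,
        Polynomial.aeval (C.map (algebraMap D K)) f = B.map (algebraMap D K)) ↔
      (∀ p : D[X], p.Monic → p.natDegree = n →
        ∃ B : Matrix (Fin n) (Fin n) D,
          Polynomial.aeval ((companionMatrix n p).map (algebraMap D K)) f
            = B.map (algebraMap D K)) :=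
  stmt_3_general n f
end

section
/- Let D be an integral domain with fraction field K. The set Int_D[M_n(D)] = {f ∈ M_n(K)[x] : f(C) ∈ M_n(D) for all C ∈ M_n(D)}, where evaluation substitutes C on the right of the coefficients (f(C) = Σ a_k C^k), is closed under multiplication of polynomials, hence is a subring of M_n(K)[x] containing M_n(D)[x]. -/
/-!
If `f` maps `Mₙ(D)` into `Mₙ(D)`, then so does `x ↦ Σ aₖ B xᵏ` for every unit `B` of `Mₙ(D)`,
because `Σ aₖ B Cᵏ = f(B C B⁻¹) B`. This expression is additive in `B`, and for `n ≥ 2` every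
matrix is a sum of units (elementary matrices are differences of transvections and the
identity), so it holds for every `B ∈ Mₙ(D)`. Taking `B = g(C)` gives `(f g)(C) ∈ Mₙ(D)`,
since `(f g)(C) = Σ aₖ g(C) Cᵏ`. For `n ≤ 1` the matrices commute and `(f g)(C) = f(C) g(C)`.
-/

open Polynomial

namespace Polynomial

section Ring

variable {S : Type*} [Ring S]

theorem eval_mul_eq_eval_mul_C_eval (f g : S[X]) (x : S) :
    (f * g).eval x = (f * C (g.eval x)).eval x := by
  induction f using Polynomial.induction_on' with
  | add p q hp hq => rw [add_mul, add_mul, eval_add, eval_add, hp, hq]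
  | monomial i a =>
    rw [← C_mul_X_pow_eq_monomial, mul_assoc, X_pow_mul, ← mul_assoc, eval_mul_X_pow,
      mul_assoc, X_pow_mul, ← mul_assoc, eval_mul_X_pow, eval_C_mul, ← C_mul, eval_C]

theorem eval_mul_C_unit (f : S[X]) (u : Sˣ) (x : S) :
    (f * C (u : S)).eval x = f.eval (u * x * ↑u⁻¹) * u := by
  induction f using Polynomial.induction_on' with
  | add p q hp hq => rw [add_mul, eval_add, eval_add, hp, hq, add_mul]
  | monomial i a =>
    rw [← C_mul_X_pow_eq_monomial, mul_assoc, X_pow_mul, ← mul_assoc, eval_mul_X_pow, ← C_mul,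
      eval_C, eval_mul_X_pow, eval_C, Units.conj_pow, mul_assoc a (_ * _ * _),
      Units.inv_mul_cancel_right, mul_assoc]

end Ring

section IntegerValued

variable {R S : Type*} [Ring R] [Ring S] (φ : R →+* S)

/-- For `φ = (algebraMap D K).mapMatrix` this is `Int_D[Mₙ(D)]`. -/
def integerValued : AddSubgroup S[X] where
  carrier := {f | ∀ c, f.eval (φ c) ∈ φ.range}
  add_mem' hf hg c := by rw [eval_add]; exact add_mem (hf c) (hg c)
  zero_mem' c := by rw [eval_zero]; exact zero_mem _
  neg_mem' hf c := by rw [eval_neg]; exact neg_mem (hf c)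

variable {φ}

theorem map_mem_integerValued (p : R[X]) : p.map φ ∈ integerValued φ :=
  fun c => ⟨p.eval c, (eval_map_apply ..).symm⟩

theorem one_mem_integerValued : (1 : S[X]) ∈ integerValued φ := by
  simpa using map_mem_integerValued (φ := φ) 1

theorem eval_mul_C_mem_range {f : S[X]} (hf : f ∈ integerValued φ) {b : R}
    (hb : b ∈ AddSubgroup.closure {a : R | IsUnit a}) (c : R) :
    (f * C (φ b)).eval (φ c) ∈ φ.range := by
  induction hb using AddSubgroup.closure_induction with
  | mem b hb =>
    obtain ⟨u, rfl⟩ := hb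
    have hconj : ↑(Units.map φ.toMonoidHom u) * φ c * ↑(Units.map φ.toMonoidHom u)⁻¹
        = φ (u * c * ↑u⁻¹) := by
      rw [Units.coe_map_inv, Units.coe_map, map_mul, map_mul]; rfl
    rw [show φ u = ↑(Units.map φ.toMonoidHom u) from rfl, eval_mul_C_unit, hconj]
    exact mul_mem (hf _) ⟨u, rfl⟩
  | zero => rw [map_zero, C_0, mul_zero, eval_zero]; exact zero_mem _
  | add a b _ _ ha hb => rw [map_add, C_add, mul_add, eval_add]; exact add_mem ha hb
  | neg a _ ha => rw [map_neg, C_neg, mul_neg, eval_neg]; exact neg_mem ha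

theorem mul_mem_integerValued_of_closure_isUnit_eq_top
    (h : AddSubgroup.closure {a : R | IsUnit a} = ⊤) {f g : S[X]}
    (hf : f ∈ integerValued φ) (hg : g ∈ integerValued φ) : f * g ∈ integerValued φ := by
  intro c
  obtain ⟨b, hb⟩ := hg c
  rw [eval_mul_eq_eval_mul_C_eval, ← hb]
  exact eval_mul_C_mem_range hf (h ▸ AddSubgroup.mem_top b) c

theorem mul_mem_integerValued_of_commute (h : ∀ a b : R, Commute (φ a) (φ b)) {f g : S[X]}
    (hf : f ∈ integerValued φ) (hg : g ∈ integerValued φ) : f * g ∈ integerValued φ := by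
  intro c
  obtain ⟨b, hb⟩ := hg c
  rw [eval_mul_eq_eval_mul_C_eval, ← hb, eval_mul_C_of_commute (h b c)]
  exact mul_mem (hf c) ⟨b, rfl⟩

end IntegerValued

end Polynomial

namespace Matrix

variable {ι R : Type*} [Fintype ι] [DecidableEq ι] [CommRing R]

theorem isUnit_transvection {i j : ι} (hij : i ≠ j) (c : R) : IsUnit (transvection i j c) :=
  (isUnit_iff_isUnit_det _).2 (by rw [det_transvection_of_ne i j hij]; exact isUnit_one)

theorem single_mem_closure_isUnit {i j : ι} (hij : i ≠ j) (c : R) :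
    single i j c ∈ AddSubgroup.closure {A : Matrix ι ι R | IsUnit A} := by
  rw [← add_sub_cancel_left 1 (single i j c)]
  exact sub_mem (AddSubgroup.subset_closure (isUnit_transvection hij c))
    (AddSubgroup.subset_closure isUnit_one)

theorem single_self_mem_closure_isUnit {i j : ι} (hij : i ≠ j) (c : R) :
    single i i c ∈ AddSubgroup.closure {A : Matrix ι ι R | IsUnit A} := by
  have hprod : transvection i j c * transvection j i 1
      = 1 + single j i 1 + single i j c + single i i c := by
    simp only [transvection, add_mul, mul_add, mul_one, one_mul, single_mul_single_same]
    abel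
  have hdiag : single i i c = transvection i j c * transvection j i 1
      - 1 - single j i 1 - single i j c := by
    rw [hprod]; abel
  rw [hdiag]
  refine sub_mem (sub_mem (sub_mem ?_ ?_) ?_) ?_
  · exact AddSubgroup.subset_closure
      ((isUnit_transvection hij c).mul (isUnit_transvection hij.symm 1))
  · exact AddSubgroup.subset_closure isUnit_one
  · exact single_mem_closure_isUnit hij.symm 1
  · exact single_mem_closure_isUnit hij c

theorem closure_isUnit_eq_top [Nontrivial ι] :
    AddSubgroup.closure {A : Matrix ι ι R | IsUnit A} = ⊤ := by
  refine eq_top_iff.2 fun A _ => ?_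
  rw [matrix_eq_sum_single A]
  refine sum_mem fun i _ => sum_mem fun j _ => ?_
  obtain rfl | hij := eq_or_ne i j
  · obtain ⟨k, hk⟩ := exists_ne i
    exact single_self_mem_closure_isUnit hk.symm _
  · exact single_mem_closure_isUnit hij _

omit [DecidableEq ι] in
theorem commute_of_subsingleton [Subsingleton ι] (A B : Matrix ι ι R) : Commute A B := by
  ext i j
  rw [mul_apply, mul_apply, Fintype.sum_subsingleton _ i, Fintype.sum_subsingleton _ i,
    Subsingleton.elim j i, mul_comm]

end Matrix

theorem Polynomial.mul_mem_integerValued_mapMatrix {ι R S : Type*} [Fintype ι] [DecidableEq ι]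
    [CommRing R] [CommRing S] {φ : R →+* S} {f g : (Matrix ι ι S)[X]}
    (hf : f ∈ integerValued φ.mapMatrix) (hg : g ∈ integerValued φ.mapMatrix) :
    f * g ∈ integerValued φ.mapMatrix := by
  cases subsingleton_or_nontrivial ι
  · exact mul_mem_integerValued_of_commute (fun _ _ => Matrix.commute_of_subsingleton _ _) hf hg
  · exact mul_mem_integerValued_of_closure_isUnit_eq_top Matrix.closure_isUnit_eq_top hf hg

theorem stmt_14_general {D K : Type*} [CommRing D] [Field K] [Algebra D K] (n : ℕ) :
    (∀ f g : Polynomial (Matrix (Fin n) (Fin n) K),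
      f ∈ {f : Polynomial (Matrix (Fin n) (Fin n) K) |
            ∀ C : Matrix (Fin n) (Fin n) D, ∃ B : Matrix (Fin n) (Fin n) D,
              f.eval (C.map (algebraMap D K)) = B.map (algebraMap D K)} →
      g ∈ {f : Polynomial (Matrix (Fin n) (Fin n) K) |
            ∀ C : Matrix (Fin n) (Fin n) D, ∃ B : Matrix (Fin n) (Fin n) D,
              f.eval (C.map (algebraMap D K)) = B.map (algebraMap D K)} →
      f * g ∈ {f : Polynomial (Matrix (Fin n) (Fin n) K) |
            ∀ C : Matrix (Fin n) (Fin n) D, ∃ B : Matrix (Fin n) (Fin n) D,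
              f.eval (C.map (algebraMap D K)) = B.map (algebraMap D K)}) ∧
    (∃ R : Subring (Polynomial (Matrix (Fin n) (Fin n) K)),
      (R : Set (Polynomial (Matrix (Fin n) (Fin n) K))) =
        {f : Polynomial (Matrix (Fin n) (Fin n) K) |
          ∀ C : Matrix (Fin n) (Fin n) D, ∃ B : Matrix (Fin n) (Fin n) D,
            f.eval (C.map (algebraMap D K)) = B.map (algebraMap D K)} ∧
      ∀ p : Polynomial (Matrix (Fin n) (Fin n) D),
        p.map ((algebraMap D K).mapMatrix) ∈ R) := by
  set φ := (algebraMap D K).mapMatrix (m := Fin n)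
  have hset : {f : Polynomial (Matrix (Fin n) (Fin n) K) |
      ∀ C : Matrix (Fin n) (Fin n) D, ∃ B : Matrix (Fin n) (Fin n) D,
        f.eval (C.map (algebraMap D K)) = B.map (algebraMap D K)} = integerValued φ :=
    Set.ext fun _ => forall_congr' fun _ => exists_congr fun _ => eq_comm
  rw [hset]
  exact ⟨fun _ _ => mul_mem_integerValued_mapMatrix,
    { integerValued φ with
      one_mem' := one_mem_integerValued
      mul_mem' := mul_mem_integerValued_mapMatrix }, rfl, map_mem_integerValued⟩

/-- Werner: the set `Int_D[Mₙ(D)]` of polynomials with coefficients in `Mₙ(K)`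
mapping `Mₙ(D)` to `Mₙ(D)` (evaluation `f(C) = Σ aₖ Cᵏ`) is closed under
multiplication, hence is a subring of `Mₙ(K)[x]` containing `Mₙ(D)[x]`. -/
theorem stmt_14 {D K : Type*} [CommRing D] [IsDomain D] [Field K] [Algebra D K]
    [IsFractionRing D K] (n : ℕ) :
    (∀ f g : Polynomial (Matrix (Fin n) (Fin n) K),
      f ∈ {f : Polynomial (Matrix (Fin n) (Fin n) K) |
            ∀ C : Matrix (Fin n) (Fin n) D, ∃ B : Matrix (Fin n) (Fin n) D,
              f.eval (C.map (algebraMap D K)) = B.map (algebraMap D K)} →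
      g ∈ {f : Polynomial (Matrix (Fin n) (Fin n) K) |
            ∀ C : Matrix (Fin n) (Fin n) D, ∃ B : Matrix (Fin n) (Fin n) D,
              f.eval (C.map (algebraMap D K)) = B.map (algebraMap D K)} →
      f * g ∈ {f : Polynomial (Matrix (Fin n) (Fin n) K) |
            ∀ C : Matrix (Fin n) (Fin n) D, ∃ B : Matrix (Fin n) (Fin n) D,
              f.eval (C.map (algebraMap D K)) = B.map (algebraMap D K)}) ∧
    (∃ R : Subring (Polynomial (Matrix (Fin n) (Fin n) K)),
      (R : Set (Polynomial (Matrix (Fin n) (Fin n) K))) =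
        {f : Polynomial (Matrix (Fin n) (Fin n) K) |
          ∀ C : Matrix (Fin n) (Fin n) D, ∃ B : Matrix (Fin n) (Fin n) D,
            f.eval (C.map (algebraMap D K)) = B.map (algebraMap D K)} ∧
      ∀ p : Polynomial (Matrix (Fin n) (Fin n) D),
        p.map ((algebraMap D K).mapMatrix) ∈ R) :=
  stmt_14_general n
end

section
/- Let D be an integral domain with fraction field K. Under the natural isomorphism φ : M_n(K)[x] → M_n(K[x]) sending Σ_k (a_ij^(k)) x^k to the matrix with (i,j) entry Σ_k a_ij^(k) x^k, the image of Int_D[M_n(D)] equals M_n(Int_D(M_n(D))), the ring of n×n matrices with entries in Int_D(M_n(D)). -/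
/-!
Multiplying an `Mₙ(D)`-valued polynomial on the left by a constant of `Mₙ(D)` keeps it
`Mₙ(D)`-valued. On the right this also holds: for a unit `u` one has
`(f * C u)(x) = f(u x u⁻¹) u`, and the matrix units lie in the subring generated by the units
of `Mₙ(D)`, since `E_ij = (1 + E_ij) - 1` for `i ≠ j` and `E_ii = E_il E_li`. Sandwiching `f`
between matrix units isolates the entries of `φ f`, as `∑ c, E_ci f E_jc = (φ f)_ij • 1`;
conversely `f = ∑ i j, E_ij (φ f)_ij`.
-/

open Polynomial Matrix Set

namespace Polynomial

variable {R : Type*} [Ring R]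

lemma eval_mul_C_units (f : R[X]) (u : Rˣ) (x : R) :
    (f * C (u : R)).eval x = f.eval (u * x * ↑u⁻¹) * u := by
  induction f using Polynomial.induction_on' with
  | add p q hp hq => simp only [add_mul, eval_add, hp, hq]
  | monomial k a =>
    rw [monomial_mul_C, eval_monomial, eval_monomial, Units.conj_pow]
    simp only [mul_assoc, Units.inv_mul, mul_one]

variable (S : Subring R)

lemma mapsTo_eval_C_mul {f : R[X]} (hf : MapsTo (eval · f) S S) {c : R} (hc : c ∈ S) :
    MapsTo (eval · (C c * f)) S S := fun x hx => by
  simp only [eval_C_mul, SetLike.mem_coe]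
  exact S.mul_mem hc (hf hx)

def rightMultipliers : Subring R where
  carrier := {c | ∀ f : R[X], MapsTo (eval · f) S S → MapsTo (eval · (f * C c)) S S}
  mul_mem' {a b} ha hb f hf := by simpa only [C_mul, mul_assoc] using hb _ (ha f hf)
  one_mem' f hf := by simpa only [C_1, mul_one] using hf
  add_mem' ha hb f hf x hx := by
    simp only [C_add, mul_add, eval_add, SetLike.mem_coe]
    exact S.add_mem (ha f hf hx) (hb f hf hx)
  zero_mem' f _ x _ := by
    simp only [C_0, mul_zero, eval_zero, SetLike.mem_coe]
    exact S.zero_mem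
  neg_mem' ha f hf x hx := by
    simp only [C_neg, mul_neg, eval_neg, SetLike.mem_coe]
    exact S.neg_mem (ha f hf hx)

variable {S}

lemma isUnit_mem_rightMultipliers {u : S} (hu : IsUnit u) : (u : R) ∈ rightMultipliers S := by
  obtain ⟨u, rfl⟩ := hu
  intro f hf x hx
  have h := eval_mul_C_units f (Units.map S.subtype.toMonoidHom u) x
  simp only [Units.coe_map, RingHom.toMonoidHom_eq_coe, MonoidHom.coe_coe,
    Subring.subtype_apply] at h
  simp only [h, SetLike.mem_coe]
  exact S.mul_mem (hf (S.mul_mem (S.mul_mem u.1.2 hx) u⁻¹.1.2)) u.1.2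

lemma isNilpotent_mem_rightMultipliers {x : S} (hx : IsNilpotent x) :
    (x : R) ∈ rightMultipliers S := by
  simpa using Subring.sub_mem _ (isUnit_mem_rightMultipliers hx.isUnit_one_add)
    (rightMultipliers S).one_mem

variable {n R : Type*} [Fintype n] [DecidableEq n] [CommRing R]

lemma single_one_mem_rightMultipliers {S : Subring (Matrix n n R)}
    (hS : ∀ i j, single i j (1 : R) ∈ S) (i j : n) :
    single i j (1 : R) ∈ rightMultipliers S := by
  have off_diag {i j : n} (hij : i ≠ j) : single i j (1 : R) ∈ rightMultipliers S :=
    isNilpotent_mem_rightMultipliers (x := ⟨_, hS i j⟩) ⟨2, Subtype.ext <| by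
      simp [sq, hij.symm]⟩
  rcases ne_or_eq i j with hij | rfl
  · exact off_diag hij
  by_cases hl : ∃ l, l ≠ i
  · obtain ⟨l, hl⟩ := hl
    rw [← one_mul (1 : R), ← single_mul_single_same (1 : R) i l i]
    exact Subring.mul_mem _ (off_diag hl.symm) (off_diag hl)
  · push Not at hl
    convert (rightMultipliers S).one_mem
    ext a b
    obtain rfl := hl a
    obtain rfl := hl b
    simp

lemma sum_C_single_mul_map_matPolyEquiv_symm (f : (Matrix n n R)[X]) :
    ∑ i, ∑ j, C (single i j 1) * (matPolyEquiv.symm f i j).map (algebraMap R _) = f := by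
  ext k : 1
  simp only [finsetSum_coeff, coeff_C_mul, coeff_map, matPolyEquiv_symm_apply_coeff]
  conv_rhs => rw [matrix_eq_sum_single (f.coeff k)]
  simp [Algebra.algebraMap_eq_smul_one, smul_single]

lemma sum_C_single_mul_mul_C_single (f : (Matrix n n R)[X]) (i j : n) :
    ∑ c, C (single c i 1) * f * C (single j c 1) =
      (matPolyEquiv.symm f i j).map (algebraMap R _) := by
  ext k : 1
  simp only [finsetSum_coeff, coeff_C_mul, coeff_mul_C, coeff_map, matPolyEquiv_symm_apply_coeff,
    single_mul_mul_single, mul_one, one_mul]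
  rw [sum_single_eq_diagonal (fun _ => _), algebraMap_eq_diagonal]
  rfl

theorem mapsTo_eval_iff_forall_mapsTo_aeval {S : Subring (Matrix n n R)}
    (hS : ∀ i j, single i j (1 : R) ∈ S) (f : (Matrix n n R)[X]) :
    MapsTo (eval · f) S S ↔
      ∀ i j, MapsTo (aeval · (matPolyEquiv.symm f i j)) (S : Set (Matrix n n R)) S := by
  constructor
  · intro hf i j x hx
    have hc (c : n) : eval x (C (single c i 1) * f * C (single j c 1)) ∈ S :=
      single_one_mem_rightMultipliers hS j c _ (mapsTo_eval_C_mul S hf (hS c i)) hx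
    simp only [← eval_map_algebraMap, ← sum_C_single_mul_mul_C_single, eval_finsetSum]
    exact S.sum_mem fun c _ => hc c
  · intro hA x hx
    rw [← sum_C_single_mul_map_matPolyEquiv_symm f]
    simp only [eval_finsetSum, eval_C_mul, eval_map_algebraMap]
    exact S.sum_mem fun i _ => S.sum_mem fun j _ => S.mul_mem (hS i j) (hA i j hx)

end Polynomial

theorem stmt_15_general {D K : Type*} [CommRing D] [Field K] [Algebra D K] (n : ℕ) :
    (matPolyEquiv (R := K) (n := Fin n)).symm ''
        {f : Polynomial (Matrix (Fin n) (Fin n) K) |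
          ∀ C : Matrix (Fin n) (Fin n) D, ∃ B : Matrix (Fin n) (Fin n) D,
            f.eval (C.map (algebraMap D K)) = B.map (algebraMap D K)} =
      {A : Matrix (Fin n) (Fin n) (Polynomial K) | ∀ i j,
        ∀ C : Matrix (Fin n) (Fin n) D, ∃ B : Matrix (Fin n) (Fin n) D,
          Polynomial.aeval (C.map (algebraMap D K)) (A i j) = B.map (algebraMap D K)} := by
  have hS (i j : Fin n) : single i j (1 : K) ∈ (algebraMap D K).mapMatrix.range :=
    ⟨single i j 1, by simp⟩
  ext A
  have key := mapsTo_eval_iff_forall_mapsTo_aeval hS (matPolyEquiv A)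
  simp only [AlgEquiv.symm_apply_apply] at key
  simp only [Set.mem_image, AlgEquiv.symm_apply_eq, exists_eq_right, Set.mem_ofPred_eq]
  simpa [MapsTo, eq_comm] using key

/-- Under the isomorphism `φ : Mₙ(K)[x] ≃ Mₙ(K[x])`, the image of `Int_D[Mₙ(D)]`
is `Mₙ(Int_D(Mₙ(D)))`, the set of matrices whose entries lie in `Int_D(Mₙ(D))`. -/
theorem stmt_15 {D K : Type*} [CommRing D] [IsDomain D] [Field K] [Algebra D K]
    [IsFractionRing D K] (n : ℕ) :
    (matPolyEquiv (R := K) (n := Fin n)).symm ''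
        {f : Polynomial (Matrix (Fin n) (Fin n) K) |
          ∀ C : Matrix (Fin n) (Fin n) D, ∃ B : Matrix (Fin n) (Fin n) D,
            f.eval (C.map (algebraMap D K)) = B.map (algebraMap D K)} =
      {A : Matrix (Fin n) (Fin n) (Polynomial K) | ∀ i j,
        ∀ C : Matrix (Fin n) (Fin n) D, ∃ B : Matrix (Fin n) (Fin n) D,
          Polynomial.aeval (C.map (algebraMap D K)) (A i j) = B.map (algebraMap D K)} :=
  stmt_15_general n
end

section
/- Let D be an integral domain with fraction field K. If C = (c_ij(x)) ∈ M_n(K[x]) is such that the corresponding element of M_n(K)[x] lies in Int_D[M_n(D)], then each entry c_ij(x) belongs to Int_D(M_n(D)). -/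
/-!
Write `Φ = matPolyEquiv A ∈ Mₙ(K)[X]`. For a matrix `W`, evaluating `Φ * C W` at `M` gives
`∑ Φₖ W Mᵏ`. The set of `W` for which this lies in `Mₙ(D)` for every `M ∈ Mₙ(D)` is an additive
group containing `1`, and it is stable under right multiplication by units `u` of `Mₙ(D)`, because
`(Φ * C (W u))(M) = (Φ * C W)(u M u⁻¹) u`. Multiplying by transvections `1 + E_ab` shows that it
contains every matrix unit `E_ab`. Finally `∑ₚ E_pi Φₖ E_jp = (Φₖ)_ij • 1`, so
`c_ij(M) = ∑ₚ E_pi (Φ * C E_jp)(M)` lies in `Mₙ(D)`.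
-/

open Polynomial Matrix

namespace Polynomial

variable {R : Type*} [Ring R]

theorem eval_mul_C_mul_units (p : R[X]) (W M : R) (u : Rˣ) :
    (p * C (W * u)).eval M = (p * C W).eval (u * M * ↑u⁻¹) * u := by
  induction p using Polynomial.induction_on' with
  | add p q hp hq => simp only [add_mul, eval_add, hp, hq]
  | monomial k c =>
    rw [monomial_mul_C, monomial_mul_C, eval_monomial, eval_monomial, Units.conj_pow]
    simp only [mul_assoc, Units.inv_mul, mul_one]

def intValuedRightMultipliers (p : R[X]) (S : Subring R) : AddSubgroup R where
  carrier := {W | ∀ M ∈ S, (p * C W).eval M ∈ S}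
  zero_mem' M _ := by simp
  add_mem' hW hV M hM := by
    simpa only [C_add, mul_add, eval_add] using S.add_mem (hW M hM) (hV M hM)
  neg_mem' hW M hM := by simpa only [C_neg, mul_neg, eval_neg] using S.neg_mem (hW M hM)

variable {p : R[X]} {S : Subring R}

theorem mem_intValuedRightMultipliers {W : R} :
    W ∈ p.intValuedRightMultipliers S ↔ ∀ M ∈ S, (p * C W).eval M ∈ S := Iff.rfl

theorem one_mem_intValuedRightMultipliers_iff :
    1 ∈ p.intValuedRightMultipliers S ↔ ∀ M ∈ S, p.eval M ∈ S := by
  simp [mem_intValuedRightMultipliers]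

theorem mul_units_mem_intValuedRightMultipliers {W : R} (hW : W ∈ p.intValuedRightMultipliers S)
    {u : Rˣ} (hu : (u : R) ∈ S) (hu' : ((u⁻¹ : Rˣ) : R) ∈ S) :
    W * u ∈ p.intValuedRightMultipliers S := fun M hM => by
  rw [eval_mul_C_mul_units]
  exact S.mul_mem (hW _ (S.mul_mem (S.mul_mem hu hM) hu')) hu

end Polynomial

namespace Matrix

variable {n R : Type*} [Fintype n] [DecidableEq n] [CommRing R]

theorem single_one_mem_of_mul_transvection_mem {G : AddSubgroup (Matrix n n R)} (h1 : 1 ∈ G)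
    (hmul : ∀ W ∈ G, ∀ a b : n, a ≠ b → W * transvection a b 1 ∈ G) (a b : n) :
    single a b 1 ∈ G := by
  have hoff : ∀ a b : n, a ≠ b → single a b (1 : R) ∈ G := fun a b hab => by
    simpa only [transvection, add_sub_cancel_left, one_mul] using
      G.sub_mem (hmul 1 h1 a b hab) h1
  rcases eq_or_ne a b with rfl | hab
  · by_cases hc : ∃ c, c ≠ a
    · obtain ⟨c, hca⟩ := hc
      -- `E_aa = E_ac (1 + E_ca) - E_ac`
      simpa only [transvection, mul_add, mul_one, single_mul_single_same, add_sub_cancel_left]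
        using
        G.sub_mem (hmul _ (hoff a c hca.symm) c a hca) (hoff a c hca.symm)
    · push Not at hc
      convert h1
      ext x y
      simp [one_apply, hc x, hc y]
  · exact hoff a b hab

end Matrix

section MatPolyEquiv

variable {n R : Type*} [Fintype n] [DecidableEq n] [CommRing R]

theorem matPolyEquiv_symm_monomial_apply (k : ℕ) (N : Matrix n n R) (i j : n) :
    matPolyEquiv.symm (monomial k N) i j = monomial k (N i j) := by
  ext m
  simp only [matPolyEquiv_symm_apply_coeff, coeff_monomial]
  split_ifs <;> rfl

theorem aeval_apply_eq_sum_single_mul_eval_mul_C (A : Matrix n n R[X]) (M : Matrix n n R)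
    (i j : n) :
    aeval M (A i j) = ∑ p, single p i 1 * (matPolyEquiv A * C (single j p 1)).eval M := by
  obtain ⟨Φ, rfl⟩ := matPolyEquiv.symm.surjective A
  rw [AlgEquiv.apply_symm_apply]
  induction Φ using Polynomial.induction_on' with
  | add Φ Ψ hΦ hΨ =>
    simp only [map_add, Matrix.add_apply, hΦ, hΨ, add_mul, eval_add, mul_add,
      Finset.sum_add_distrib]
  | monomial k N =>
    simp only [matPolyEquiv_symm_monomial_apply, aeval_monomial, monomial_mul_C, eval_monomial,
      ← mul_assoc, ← Finset.sum_mul, single_mul_mul_single, one_mul, mul_one,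
      sum_single_eq_diagonal, algebraMap_eq_diagonal]
    rfl

end MatPolyEquiv

theorem stmt_16_general {D K : Type*} [CommRing D] [Field K] [Algebra D K] (n : ℕ)
    (A : Matrix (Fin n) (Fin n) (Polynomial K))
    (hA : ∀ C : Matrix (Fin n) (Fin n) D, ∃ B : Matrix (Fin n) (Fin n) D,
        (matPolyEquiv A).eval (C.map (algebraMap D K)) = B.map (algebraMap D K)) :
    ∀ i j, ∀ C : Matrix (Fin n) (Fin n) D, ∃ B : Matrix (Fin n) (Fin n) D,
      Polynomial.aeval (C.map (algebraMap D K)) (A i j) = B.map (algebraMap D K) := by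
  intro i j C₀
  let S : Subring (Matrix (Fin n) (Fin n) K) := (algebraMap D K).mapMatrix.range
  have single_mem (a b : Fin n) : single a b 1 ∈ S :=
    ⟨single a b 1, by simp [RingHom.mapMatrix_apply, map_single]⟩
  have single_mem_multipliers (a b : Fin n) :
      single a b 1 ∈ (matPolyEquiv A).intValuedRightMultipliers S := by
    refine single_one_mem_of_mul_transvection_mem ?_ (fun W hW c d hcd => ?_) a b
    · rw [one_mem_intValuedRightMultipliers_iff]
      rintro _ ⟨C, rfl⟩
      obtain ⟨B, hB⟩ := hA C
      exact ⟨B, hB.symm⟩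
    · let t : TransvectionStruct (Fin n) K := ⟨c, d, hcd, 1⟩
      have ht : t.toMatrix ∈ S := S.add_mem S.one_mem (single_mem c d)
      have ht' : t.inv.toMatrix ∈ S := by
        simpa [TransvectionStruct.toMatrix, transvection, single_neg] using
          S.add_mem S.one_mem (S.neg_mem (single_mem c d))
      exact mul_units_mem_intValuedRightMultipliers (u := ⟨_, _, t.mul_inv, t.inv_mul⟩) hW ht ht'
  obtain ⟨B, hB⟩ : aeval (C₀.map (algebraMap D K)) (A i j) ∈ S := by
    rw [aeval_apply_eq_sum_single_mul_eval_mul_C]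
    exact S.sum_mem fun p _ =>
      S.mul_mem (single_mem p i) (single_mem_multipliers j p _ ⟨C₀, rfl⟩)
  exact ⟨B, hB.symm⟩

/-- If `C = (c_ij(x)) ∈ Mₙ(K[x])` corresponds (under `φ`) to an element of
`Int_D[Mₙ(D)]`, then each entry `c_ij(x)` belongs to `Int_D(Mₙ(D))`. -/
theorem stmt_16 {D K : Type*} [CommRing D] [IsDomain D] [Field K] [Algebra D K]
    [IsFractionRing D K] (n : ℕ) (A : Matrix (Fin n) (Fin n) (Polynomial K))
    (hA : ∀ C : Matrix (Fin n) (Fin n) D, ∃ B : Matrix (Fin n) (Fin n) D,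
        (matPolyEquiv A).eval (C.map (algebraMap D K)) = B.map (algebraMap D K)) :
    ∀ i j, ∀ C : Matrix (Fin n) (Fin n) D, ∃ B : Matrix (Fin n) (Fin n) D,
      Polynomial.aeval (C.map (algebraMap D K)) (A i j) = B.map (algebraMap D K) :=
  stmt_16_general n A hA
end

section
/- Let D be an integral domain and d ∈ D \ {0}. If g ∈ D[x] is divisible modulo dD[x] by every monic polynomial of degree n in D[x], then for every C ∈ M_n(D), g(C) ∈ M_n(dD), i.e., every entry of g(C) is divisible by d. -/
open Polynomial

/-! By Cayley–Hamilton, `g(C) = q(C) χ_C(C) + d r(C) = d r(C)` for the decomposition of `g`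
modulo `d D[X]` against the characteristic polynomial `χ_C`, which is monic of degree `n`. -/

theorem Matrix.dvd_aeval_apply_of_eq_mul_charpoly_add_C_mul {R ι : Type*} [CommRing R]
    [Fintype ι] [DecidableEq ι] (M : Matrix ι ι R) {g q r : R[X]} {d : R}
    (hg : g = q * M.charpoly + C d * r) (i j : ι) : d ∣ aeval M g i j := by
  have hgM : aeval M g = d • aeval M r := by
    rw [hg, map_add, map_mul, Matrix.aeval_self_charpoly, mul_zero, zero_add, map_mul, aeval_C,
      Algebra.algebraMap_eq_smul_one, smul_one_mul]
  rw [hgM, Matrix.smul_apply, smul_eq_mul]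
  exact dvd_mul_right d _

theorem stmt_19_general {D : Type*} [CommRing D] (n : ℕ) (d : D)
    (g : D[X])
    (hdiv : ∀ h : D[X], h.Monic → h.natDegree = n →
      ∃ q r : D[X], g = q * h + Polynomial.C d * r) :
    ∀ C : Matrix (Fin n) (Fin n) D, ∀ i j, d ∣ Polynomial.aeval C g i j := by
  intro C i j
  -- over the zero ring `C.charpoly = 1` does not have degree `n`
  cases subsingleton_or_nontrivial D
  · exact ⟨0, Subsingleton.elim _ _⟩
  obtain ⟨q, r, hg⟩ := hdiv C.charpoly C.charpoly_monic
    (by rw [C.charpoly_natDegree_eq_dim, Fintype.card_fin])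
  exact C.dvd_aeval_apply_of_eq_mul_charpoly_add_C_mul hg i j

/-- If `g ∈ D[x]` is divisible modulo `dD[x]` by every monic polynomial of degree `n`,
then for every `C ∈ Mₙ(D)`, every entry of `g(C)` is divisible by `d`. -/
theorem stmt_19 {D : Type*} [CommRing D] [IsDomain D] (n : ℕ) (d : D) (hd : d ≠ 0)
    (g : D[X])
    (hdiv : ∀ h : D[X], h.Monic → h.natDegree = n →
      ∃ q r : D[X], g = q * h + Polynomial.C d * r) :
    ∀ C : Matrix (Fin n) (Fin n) D, ∀ i j, d ∣ Polynomial.aeval C g i j :=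
  stmt_19_general n d g hdiv
end
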